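/- Block inverse bound used in the well-conditioning proof: let T₁ ∈ S^{d₁} with T₁ ⪰ 0, T₂ ∈ S^{d₂} with T₂ ≻ 0, and let K = [[K₁₁, K₂₁ᵀ], [K₂₁, K₂₂]] ∈ S^{d₁+d₂} be positive semidefinite with K₁₁ ≻ 0. Then the matrix C = diag(T₁, T₂) + K is symmetric positive definite and ‖C⁻¹‖ ≤ (1 + ‖K₂₁K₁₁⁻¹‖)²·(‖K₁₁⁻¹‖ + ‖T₂⁻¹‖), where ‖·‖ denotes the spectral norm. -/

import Mathlib

open Matrix
open scoped Kronecker

noncomputable section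

/-- Euclidean norm of a vector. -/
def vnorm {I : Type*} [Fintype I] (v : I → ℝ) : ℝ := Real.sqrt (∑ i, v i ^ 2)

/-- Frobenius norm of a matrix. -/
def frobNorm {I J : Type*} [Fintype I] [Fintype J] (A : Matrix I J ℝ) : ℝ :=
  Real.sqrt (∑ i, ∑ j, A i j ^ 2)

/-- Spectral norm (ℓ₂ operator norm) of a matrix. -/
def specNorm {I J : Type*} [Fintype I] [Fintype J] (A : Matrix I J ℝ) : ℝ :=
  sSup {c | ∃ v : J → ℝ, vnorm v ≤ 1 ∧ c = vnorm (A *ᵥ v)}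

/-- Largest (real) eigenvalue of a square matrix. -/
def lmax {I : Type*} [Fintype I] (A : Matrix I I ℝ) : ℝ :=
  sSup {t | ∃ v : I → ℝ, v ≠ 0 ∧ A *ᵥ v = t • v}

/-- Smallest (real) eigenvalue of a square matrix. -/
def lmin {I : Type*} [Fintype I] (A : Matrix I I ℝ) : ℝ :=
  sInf {t | ∃ v : I → ℝ, v ≠ 0 ∧ A *ᵥ v = t • v}

/-- Column-stacking vectorization `vec`: `vecM X (j, i) = X i j`. -/
def vecM {J : Type*} (X : Matrix J J ℝ) : J × J → ℝ := fun p => X p.2 p.1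

/-- `Ψ` is an orthonormal basis matrix for the space of vectorized symmetric matrices:
`ΨᵀΨ = I` and `ΨΨᵀ` is the orthogonal projection onto vectorized symmetric matrices. -/
def IsSymBasis {J K : Type*} [Fintype J] [Fintype K] [DecidableEq K]
    (Ψ : Matrix (J × J) K ℝ) : Prop :=
  Ψᵀ * Ψ = 1 ∧ ∀ X : Matrix J J ℝ, Ψ *ᵥ (Ψᵀ *ᵥ vecM X) = vecM ((1/2 : ℝ) • (X + Xᵀ))

/-- Symmetric vectorization with respect to the basis matrix `Ψ`. -/
def svec {J K : Type*} [Fintype J] (Ψ : Matrix (J × J) K ℝ) (X : Matrix J J ℝ) : K → ℝ :=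
  Ψᵀ *ᵥ vecM X

/-- Symmetric Kronecker product with respect to the basis matrices `Ψ₁, Ψ₂`. -/
def skron {J J' K K' : Type*} [Fintype J] [Fintype J']
    (Ψ₁ : Matrix (J × J) K ℝ) (Ψ₂ : Matrix (J' × J') K' ℝ)
    (A B : Matrix J J' ℝ) : Matrix K K' ℝ :=
  (1/2 : ℝ) • (Ψ₁ᵀ * ((A ⊗ₖ B + B ⊗ₖ A) * Ψ₂))

/-- Positive semidefinite square root (junk value `0` off the PSD cone). -/
def psqrt {J : Type*} [Fintype J] [DecidableEq J] (A : Matrix J J ℝ) : Matrix J J ℝ :=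
  @dite _ A.PosSemidef (Classical.dec _) (fun h => (h.1.eigenvectorUnitary : Matrix J J ℝ) *
    diagonal (fun i => Real.sqrt (h.1.eigenvalues i)) * (star h.1.eigenvectorUnitary : Matrix J J ℝ)) (fun _ => 0)

/-- Condition number in spectral norm. -/
def condNum {J : Type*} [Fintype J] [DecidableEq J] (M : Matrix J J ℝ) : ℝ :=
  specNorm M * specNorm M⁻¹

/-- Assumption A1: `W` is the Nesterov--Todd scaling point of a well-centered
primal-dual pair `(X, S)` that is `O(μ)`-close to a strictly complementary solution. -/
def A1 {n : ℕ} (μ L δ χ₁ : ℝ) (W X S Xs Ss : Matrix (Fin n) (Fin n) ℝ) : Prop :=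
  X.PosDef ∧ S.PosDef ∧ Xs.PosSemidef ∧ Ss.PosSemidef ∧ Xs * Ss = 0 ∧
    (Xs + Ss - χ₁⁻¹ • (1 : Matrix (Fin n) (Fin n) ℝ)).PosSemidef ∧
    ((1 : Matrix (Fin n) (Fin n) ℝ) - (Xs + Ss)).PosSemidef ∧
    W = psqrt X * (psqrt (psqrt X * S * psqrt X))⁻¹ * psqrt X ∧
    specNorm ((1/μ) • (psqrt X * S * psqrt X) - 1) ≤ δ ∧
    specNorm (X - Xs) ≤ L * μ ∧ specNorm (S - Ss) ≤ L

section Stmt18Aux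

open Matrix

variable {I J : Type*} [Fintype I] [Fintype J]

lemma vnorm_nonneg (v : I → ℝ) : 0 ≤ vnorm v := Real.sqrt_nonneg _

lemma vnorm_sq (v : I → ℝ) : vnorm v ^ 2 = ∑ i, v i ^ 2 :=
  Real.sq_sqrt (Finset.sum_nonneg fun _ _ => sq_nonneg _)

lemma vnorm_sq_dot (v : I → ℝ) : vnorm v ^ 2 = v ⬝ᵥ v := by
  rw [vnorm_sq]; simp [dotProduct, sq]

lemma vnorm_zero' : vnorm (0 : I → ℝ) = 0 := by simp [vnorm]

lemma vnorm_eq_zero' {v : I → ℝ} (h : vnorm v = 0) : v = 0 := by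
  have h2 : ∑ i, v i ^ 2 = 0 := by rw [← vnorm_sq, h]; norm_num
  funext i
  have := (Finset.sum_eq_zero_iff_of_nonneg (fun i _ => sq_nonneg (v i))).1 h2 i
    (Finset.mem_univ i)
  exact pow_eq_zero_iff (n := 2) (by norm_num) |>.1 this

lemma vnorm_smul' (c : ℝ) (v : I → ℝ) : vnorm (c • v) = |c| * vnorm v := by
  simp only [vnorm, Pi.smul_apply, smul_eq_mul, mul_pow, ← Finset.mul_sum]
  rw [Real.sqrt_mul (sq_nonneg c), Real.sqrt_sq_eq_abs]

lemma dot_le_vnorm_mul (v w : I → ℝ) : v ⬝ᵥ w ≤ vnorm v * vnorm w := by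
  have h := Finset.sum_mul_sq_le_sq_mul_sq Finset.univ v w
  refine (le_abs_self _).trans ?_
  rw [← Real.sqrt_sq_eq_abs, vnorm, vnorm,
    ← Real.sqrt_mul (Finset.sum_nonneg fun _ _ => sq_nonneg _)]
  exact Real.sqrt_le_sqrt (by simpa [dotProduct] using h)

lemma vnorm_add_le (v w : I → ℝ) : vnorm (v + w) ≤ vnorm v + vnorm w := by
  have h1 : vnorm (v + w) ^ 2 ≤ (vnorm v + vnorm w) ^ 2 := by
    rw [vnorm_sq_dot]
    have he : (v + w) ⬝ᵥ (v + w) = v ⬝ᵥ v + 2 * (v ⬝ᵥ w) + w ⬝ᵥ w := by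
      simp [dotProduct_add, add_dotProduct, dotProduct_comm w v]; ring
    rw [he, ← vnorm_sq_dot, ← vnorm_sq_dot]
    nlinarith [dot_le_vnorm_mul v w, vnorm_nonneg v, vnorm_nonneg w]
  calc vnorm (v + w) = Real.sqrt (vnorm (v + w) ^ 2) :=
        (Real.sqrt_sq (vnorm_nonneg _)).symm
    _ ≤ Real.sqrt ((vnorm v + vnorm w) ^ 2) := Real.sqrt_le_sqrt h1
    _ = vnorm v + vnorm w :=
        Real.sqrt_sq (add_nonneg (vnorm_nonneg v) (vnorm_nonneg w))

lemma specNorm_bddAbove (A : Matrix I J ℝ) :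
    BddAbove {c | ∃ v : J → ℝ, vnorm v ≤ 1 ∧ c = vnorm (A *ᵥ v)} := by
  refine ⟨frobNorm A, fun c hc => ?_⟩
  obtain ⟨v, hv, rfl⟩ := hc
  have hv2 : ∑ j, v j ^ 2 ≤ 1 := by
    have := pow_le_pow_left₀ (vnorm_nonneg v) hv 2
    rw [vnorm_sq] at this; simpa using this
  have h2 : vnorm (A *ᵥ v) ^ 2 ≤ ∑ i, ∑ j, A i j ^ 2 := by
    rw [vnorm_sq]
    calc ∑ i, ((A *ᵥ v) i) ^ 2 ≤ ∑ i, (∑ j, A i j ^ 2) * ∑ j, v j ^ 2 :=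
          Finset.sum_le_sum fun i _ => by
            simpa [Matrix.mulVec, dotProduct] using
              Finset.sum_mul_sq_le_sq_mul_sq Finset.univ (A i) v
      _ ≤ ∑ i, (∑ j, A i j ^ 2) * 1 :=
          Finset.sum_le_sum fun i _ =>
            mul_le_mul_of_nonneg_left hv2 (Finset.sum_nonneg fun _ _ => sq_nonneg _)
      _ = _ := by simp
  calc vnorm (A *ᵥ v) = Real.sqrt (vnorm (A *ᵥ v) ^ 2) :=
        (Real.sqrt_sq (vnorm_nonneg _)).symm
    _ ≤ Real.sqrt (∑ i, ∑ j, A i j ^ 2) := Real.sqrt_le_sqrt h2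
    _ = frobNorm A := rfl

lemma specNorm_nonneg (A : Matrix I J ℝ) : 0 ≤ specNorm A := by
  have h0 : (0 : ℝ) ∈ {c | ∃ v : J → ℝ, vnorm v ≤ 1 ∧ c = vnorm (A *ᵥ v)} :=
    ⟨0, by simp [vnorm_zero'], by simp [vnorm_zero']⟩
  exact le_csSup (specNorm_bddAbove A) h0

lemma vnorm_mulVec_le (A : Matrix I J ℝ) (v : J → ℝ) :
    vnorm (A *ᵥ v) ≤ specNorm A * vnorm v := by
  rcases eq_or_ne (vnorm v) 0 with h | h
  · rw [vnorm_eq_zero' h]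
    simp [vnorm_zero']
  · have hpos : 0 < vnorm v := (vnorm_nonneg v).lt_of_ne' h
    have hw : vnorm ((vnorm v)⁻¹ • v) = 1 := by
      rw [vnorm_smul', abs_of_pos (inv_pos.2 hpos), inv_mul_cancel₀ h]
    have hle := le_csSup (specNorm_bddAbove A)
      ⟨(vnorm v)⁻¹ • v, hw.le, rfl⟩
    rw [Matrix.mulVec_smul, vnorm_smul', abs_of_pos (inv_pos.2 hpos)] at hle
    calc vnorm (A *ᵥ v) = vnorm v * ((vnorm v)⁻¹ * vnorm (A *ᵥ v)) := by
          field_simp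
      _ ≤ vnorm v * specNorm A := mul_le_mul_of_nonneg_left hle hpos.le
      _ = specNorm A * vnorm v := mul_comm _ _

lemma specNorm_le' {A : Matrix I J ℝ} {M : ℝ} (hM : 0 ≤ M)
    (h : ∀ v, vnorm (A *ᵥ v) ≤ M * vnorm v) : specNorm A ≤ M := by
  refine Real.sSup_le (fun c hc => ?_) hM
  obtain ⟨v, hv, rfl⟩ := hc
  calc vnorm (A *ᵥ v) ≤ M * vnorm v := h v
    _ ≤ M * 1 := mul_le_mul_of_nonneg_left hv hM
    _ = M := mul_one M

lemma specNorm_transpose_le (A : Matrix I J ℝ) : specNorm Aᵀ ≤ specNorm A := by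
  refine specNorm_le' (specNorm_nonneg A) fun v => ?_
  set t := vnorm (Aᵀ *ᵥ v) with ht
  have h1 : t ^ 2 = (A *ᵥ (Aᵀ *ᵥ v)) ⬝ᵥ v := by
    rw [vnorm_sq_dot, dotProduct_mulVec, vecMul_transpose]
  have h2 : (A *ᵥ (Aᵀ *ᵥ v)) ⬝ᵥ v ≤ specNorm A * t * vnorm v := by
    calc (A *ᵥ (Aᵀ *ᵥ v)) ⬝ᵥ v ≤ vnorm (A *ᵥ (Aᵀ *ᵥ v)) * vnorm v :=
          dot_le_vnorm_mul _ _
      _ ≤ specNorm A * t * vnorm v := by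
          have := vnorm_mulVec_le A (Aᵀ *ᵥ v)
          have hv := vnorm_nonneg v
          nlinarith
  rcases eq_or_ne t 0 with h0 | h0
  · rw [h0]; exact mul_nonneg (specNorm_nonneg A) (vnorm_nonneg v)
  · have htpos : 0 < t := (vnorm_nonneg _).lt_of_ne' h0
    nlinarith [h1, h2]

open scoped MatrixOrder in
lemma sq_vnorm_le_specNorm_inv_mul {I : Type*} [Fintype I] [DecidableEq I]
    {A : Matrix I I ℝ} (hA : A.PosDef) (v : I → ℝ) :
    vnorm v ^ 2 ≤ specNorm A⁻¹ * (v ⬝ᵥ A *ᵥ v) := by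
  have hdet : IsUnit A.det := isUnit_iff_ne_zero.2 hA.det_pos.ne'
  have hinv : A⁻¹.PosDef := hA.inv
  set R := CFC.sqrt A⁻¹ with hRdef
  have hRR : R * R = A⁻¹ := CFC.sqrt_mul_sqrt_self A⁻¹ (Matrix.nonneg_iff_posSemidef.2 hinv.posSemidef)
  have hRs : Rᵀ = R := by
    rw [← conjTranspose_eq_transpose_of_trivial]
    exact (Matrix.nonneg_iff_posSemidef.1 (CFC.sqrt_nonneg A⁻¹)).1
  have hmv : ∀ w z : I → ℝ, w ⬝ᵥ (A⁻¹ *ᵥ z) = (R *ᵥ w) ⬝ᵥ (R *ᵥ z) := by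
    intro w z
    have hwv : w ᵥ* R = R *ᵥ w := by
      conv_lhs => rw [← hRs]
      rw [vecMul_transpose]
    rw [← hRR, ← Matrix.mulVec_mulVec, dotProduct_mulVec, hwv]
  have hAv : A⁻¹ *ᵥ (A *ᵥ v) = v := by
    rw [Matrix.mulVec_mulVec, Matrix.nonsing_inv_mul A hdet, Matrix.one_mulVec]
  set a := vnorm (R *ᵥ v) with ha
  set b := vnorm (R *ᵥ (A *ᵥ v)) with hb
  have h1 : v ⬝ᵥ v = (R *ᵥ v) ⬝ᵥ (R *ᵥ (A *ᵥ v)) := by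
    rw [← hmv v (A *ᵥ v), hAv]
  have h2 : v ⬝ᵥ v ≤ a * b := by rw [h1]; exact dot_le_vnorm_mul _ _
  have h3 : a ^ 2 ≤ specNorm A⁻¹ * vnorm v ^ 2 := by
    rw [vnorm_sq_dot, ← hmv v v]
    calc v ⬝ᵥ (A⁻¹ *ᵥ v) ≤ vnorm v * vnorm (A⁻¹ *ᵥ v) := dot_le_vnorm_mul _ _
      _ ≤ vnorm v * (specNorm A⁻¹ * vnorm v) := by
          have := vnorm_mulVec_le A⁻¹ v
          have := vnorm_nonneg v
          nlinarith
      _ = specNorm A⁻¹ * vnorm v ^ 2 := by ring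
  have h4 : b ^ 2 = v ⬝ᵥ (A *ᵥ v) := by
    rw [vnorm_sq_dot, ← hmv (A *ᵥ v) (A *ᵥ v), hAv, dotProduct_comm]
  have hq : 0 ≤ v ⬝ᵥ (A *ᵥ v) := by rw [← h4]; positivity
  rcases eq_or_ne (vnorm v) 0 with h0 | h0
  · rw [h0]
    simpa using mul_nonneg (specNorm_nonneg A⁻¹) hq
  · have hn : 0 < vnorm v := (vnorm_nonneg v).lt_of_ne' h0
    have hvv : v ⬝ᵥ v = vnorm v ^ 2 := (vnorm_sq_dot v).symm
    have hann : 0 ≤ a := vnorm_nonneg _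
    have hbnn : 0 ≤ b := vnorm_nonneg _
    have hs : 0 ≤ specNorm A⁻¹ := specNorm_nonneg _
    nlinarith [h2, h3, h4, sq_nonneg (a * b), mul_pos hn hn, sq_nonneg (a - b)]

end Stmt18Aux

section MoreAux
open Matrix
variable {I J : Type*} [Fintype I] [Fintype J]

lemma vnorm_neg' (v : I → ℝ) : vnorm (-v) = vnorm v := by simp [vnorm]

lemma psd_dot_nonneg {A : Matrix I I ℝ} (hA : A.PosSemidef) (v : I → ℝ) :
    0 ≤ v ⬝ᵥ (A *ᵥ v) := by simpa using hA.dotProduct_mulVec_nonneg v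

lemma pd_dot_pos {A : Matrix I I ℝ} (hA : A.PosDef) {v : I → ℝ} (hv : v ≠ 0) :
    0 < v ⬝ᵥ (A *ᵥ v) := by simpa using hA.dotProduct_mulVec_pos hv

end MoreAux


set_option maxHeartbeats 1000000 in
/-- block inverse bound used in the proof of Theorem 3.5. -/
theorem stmt18 {d₁ d₂ : ℕ}
    (T₁ : Matrix (Fin d₁) (Fin d₁) ℝ) (hT₁ : T₁.PosSemidef)
    (T₂ : Matrix (Fin d₂) (Fin d₂) ℝ) (hT₂ : T₂.PosDef)
    (K₁₁ : Matrix (Fin d₁) (Fin d₁) ℝ) (hK₁₁ : K₁₁.PosDef)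
    (K₂₁ : Matrix (Fin d₂) (Fin d₁) ℝ) (K₂₂ : Matrix (Fin d₂) (Fin d₂) ℝ)
    (hK : (Matrix.fromBlocks K₁₁ K₂₁ᵀ K₂₁ K₂₂).PosSemidef)
    (C : Matrix (Fin d₁ ⊕ Fin d₂) (Fin d₁ ⊕ Fin d₂) ℝ)
    (hC : C = Matrix.fromBlocks T₁ 0 0 T₂ + Matrix.fromBlocks K₁₁ K₂₁ᵀ K₂₁ K₂₂) :
    C.PosDef ∧
      specNorm C⁻¹ ≤
        (1 + specNorm (K₂₁ * K₁₁⁻¹)) ^ 2 * (specNorm K₁₁⁻¹ + specNorm T₂⁻¹) := by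
  have hdet : IsUnit K₁₁.det := isUnit_iff_ne_zero.2 hK₁₁.det_pos.ne'
  haveI : Invertible K₁₁ := K₁₁.invertibleOfIsUnitDet hdet
  set E : Matrix (Fin d₁) (Fin d₂) ℝ := K₁₁⁻¹ * K₂₁ᵀ with hE
  have hKH : (K₂₁ᵀ)ᴴ = K₂₁ := by
    rw [conjTranspose_eq_transpose_of_trivial, transpose_transpose]
  have hK' : (fromBlocks K₁₁ K₂₁ᵀ (K₂₁ᵀ)ᴴ K₂₂).PosSemidef := by rw [hKH]; exact hK
  set S : Matrix (Fin d₂) (Fin d₂) ℝ := K₂₂ - K₂₁ * K₁₁⁻¹ * K₂₁ᵀ with hSdef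
  have hSpsd : S.PosSemidef := by
    have := (PosDef.fromBlocks₁₁ K₂₁ᵀ K₂₂ hK₁₁).mp hK'
    rwa [hKH] at this
  have hstarv : ∀ {n : Type} [Fintype n] (v : n → ℝ), star v = v := fun v =>
    funext fun i => star_trivial _
  -- the key quadratic-form identity
  have key : ∀ x : Fin d₁ ⊕ Fin d₂ → ℝ,
      x ⬝ᵥ (C *ᵥ x) =
        (x ∘ Sum.inl) ⬝ᵥ (T₁ *ᵥ (x ∘ Sum.inl)) +
          (x ∘ Sum.inr) ⬝ᵥ (T₂ *ᵥ (x ∘ Sum.inr)) +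
        ((x ∘ Sum.inl + E *ᵥ (x ∘ Sum.inr)) ⬝ᵥ
            (K₁₁ *ᵥ (x ∘ Sum.inl + E *ᵥ (x ∘ Sum.inr))) +
          (x ∘ Sum.inr) ⬝ᵥ (S *ᵥ (x ∘ Sum.inr))) := by
    intro x
    set x₁ := x ∘ Sum.inl with hx1
    set x₂ := x ∘ Sum.inr with hx2
    have hx : Sum.elim x₁ x₂ = x := Sum.elim_comp_inl_inr x
    have hschur := schur_complement_eq₁₁ (A := K₁₁) K₂₁ᵀ K₂₂ x₁ x₂ hK₁₁.1
    simp only [hstarv, ← dotProduct_mulVec] at hschur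
    rw [hKH, ← hSdef, ← hE] at hschur
    have hD : Sum.elim x₁ x₂ ⬝ᵥ ((fromBlocks T₁ 0 0 T₂ : Matrix _ _ ℝ) *ᵥ Sum.elim x₁ x₂)
        = x₁ ⬝ᵥ (T₁ *ᵥ x₁) + x₂ ⬝ᵥ (T₂ *ᵥ x₂) := by
      rw [fromBlocks_mulVec, sumElim_dotProduct_sumElim]
      simp
    conv_lhs => rw [← hx]
    rw [hC, add_mulVec, dotProduct_add, hD, hschur]
  -- C is positive definite
  have hne : ∀ {x : Fin d₁ ⊕ Fin d₂ → ℝ}, x ≠ 0 → x ∘ Sum.inl ≠ 0 ∨ x ∘ Sum.inr ≠ 0 := by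
    intro x hx
    by_contra h
    push_neg at h
    exact hx (funext fun i => by
      cases i with
      | inl i => exact congrFun h.1 i
      | inr i => exact congrFun h.2 i)
  have hCpd : C.PosDef := by
    refine PosDef.of_dotProduct_mulVec_pos ?_ ?_
    · show Cᴴ = C
      have hDh : (fromBlocks T₁ 0 0 T₂ : Matrix _ _ ℝ)ᴴ = fromBlocks T₁ 0 0 T₂ := by
        rw [fromBlocks_conjTranspose]
        simp only [conjTranspose_zero]
        rw [hT₁.1.eq, hT₂.1.eq]
      rw [hC, conjTranspose_add, hDh, hK.1.eq]
    · intro x hx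
      rw [hstarv]
      have hk := key x
      have ht1 := psd_dot_nonneg hT₁ (x ∘ Sum.inl)
      have ht2 := psd_dot_nonneg hT₂.posSemidef (x ∘ Sum.inr)
      have hsq := psd_dot_nonneg hSpsd (x ∘ Sum.inr)
      have hkq := psd_dot_nonneg hK₁₁.posSemidef (x ∘ Sum.inl + E *ᵥ (x ∘ Sum.inr))
      rcases eq_or_ne (x ∘ Sum.inr) 0 with h2 | h2
      · have h1 : x ∘ Sum.inl ≠ 0 := by
          rcases hne hx with h | h
          · exact h
          · exact absurd h2 h
        have hy : x ∘ Sum.inl + E *ᵥ (x ∘ Sum.inr) = x ∘ Sum.inl := by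
          rw [h2, Matrix.mulVec_zero, add_zero]
        rw [hy] at hk hkq
        have := pd_dot_pos hK₁₁ h1
        linarith
      · have := pd_dot_pos hT₂ h2
        linarith
  refine ⟨hCpd, ?_⟩
  -- abbreviations
  set s := specNorm (K₂₁ * K₁₁⁻¹) with hs
  set a := specNorm K₁₁⁻¹ with ha
  set b := specNorm T₂⁻¹ with hb
  have hs0 : 0 ≤ s := specNorm_nonneg _
  have ha0 : 0 ≤ a := specNorm_nonneg _
  have hb0 : 0 ≤ b := specNorm_nonneg _
  have hM0 : 0 ≤ (1 + s) ^ 2 * (a + b) := by positivity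
  have hK11t : K₁₁ᵀ = K₁₁ := by
    rw [← conjTranspose_eq_transpose_of_trivial]; exact hK₁₁.1.eq
  have hEeq : E = (K₂₁ * K₁₁⁻¹)ᵀ := by
    rw [transpose_mul, transpose_nonsing_inv, hK11t]
  have hEs : specNorm E ≤ s := by rw [hEeq]; exact specNorm_transpose_le _
  -- the coercivity bound
  have key2 : ∀ x : Fin d₁ ⊕ Fin d₂ → ℝ,
      vnorm x ^ 2 ≤ (1 + s) ^ 2 * (a + b) * (x ⬝ᵥ (C *ᵥ x)) := by
    intro x
    set x₁ := x ∘ Sum.inl with hx1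
    set x₂ := x ∘ Sum.inr with hx2
    set y := x₁ + E *ᵥ x₂ with hy
    have f1 : vnorm x ^ 2 = vnorm x₁ ^ 2 + vnorm x₂ ^ 2 := by
      rw [vnorm_sq, vnorm_sq, vnorm_sq, Fintype.sum_sum_type]
      rfl
    have f2 : vnorm x₁ ≤ vnorm y + s * vnorm x₂ := by
      have hx1y : x₁ = y + -(E *ᵥ x₂) := by rw [hy]; abel
      calc vnorm x₁ = vnorm (y + -(E *ᵥ x₂)) := by rw [← hx1y]
        _ ≤ vnorm y + vnorm (-(E *ᵥ x₂)) := vnorm_add_le _ _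
        _ = vnorm y + vnorm (E *ᵥ x₂) := by rw [vnorm_neg']
        _ ≤ vnorm y + specNorm E * vnorm x₂ := by
            linarith [vnorm_mulVec_le E x₂]
        _ ≤ vnorm y + s * vnorm x₂ := by
            nlinarith [vnorm_nonneg x₂]
    have f3 : vnorm y ^ 2 ≤ a * (y ⬝ᵥ (K₁₁ *ᵥ y)) := sq_vnorm_le_specNorm_inv_mul hK₁₁ y
    have f4 : vnorm x₂ ^ 2 ≤ b * (x₂ ⬝ᵥ (T₂ *ᵥ x₂)) := sq_vnorm_le_specNorm_inv_mul hT₂ x₂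
    have hk := key x
    have ht1 := psd_dot_nonneg hT₁ x₁
    have hsq := psd_dot_nonneg hSpsd x₂
    have hkq := psd_dot_nonneg hK₁₁.posSemidef y
    have ht2 := psd_dot_nonneg hT₂.posSemidef x₂
    have f5 : y ⬝ᵥ (K₁₁ *ᵥ y) + x₂ ⬝ᵥ (T₂ *ᵥ x₂) ≤ x ⬝ᵥ (C *ᵥ x) := by
      rw [hk]; linarith
    have hn1 : 0 ≤ vnorm x₁ := vnorm_nonneg _
    have hny : 0 ≤ vnorm y := vnorm_nonneg _
    have hn2 : 0 ≤ vnorm x₂ := vnorm_nonneg _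
    have g1 : vnorm x₁ ^ 2 ≤ (vnorm y + s * vnorm x₂) ^ 2 :=
      pow_le_pow_left₀ hn1 f2 2
    have g2 : (vnorm y + s * vnorm x₂) ^ 2 + vnorm x₂ ^ 2 ≤
        (1 + s) ^ 2 * (vnorm y ^ 2 + vnorm x₂ ^ 2) := by
      nlinarith [sq_nonneg (vnorm y - vnorm x₂), sq_nonneg (vnorm y), sq_nonneg (vnorm x₂),
        mul_nonneg hs0 (sq_nonneg (vnorm y - vnorm x₂)), mul_nonneg (mul_nonneg hs0 hs0) (sq_nonneg (vnorm y))]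
    have g3 : vnorm y ^ 2 + vnorm x₂ ^ 2 ≤ (a + b) * (y ⬝ᵥ (K₁₁ *ᵥ y) + x₂ ⬝ᵥ (T₂ *ᵥ x₂)) := by
      nlinarith [mul_nonneg ha0 ht2, mul_nonneg hb0 hkq]
    have g4 : (a + b) * (y ⬝ᵥ (K₁₁ *ᵥ y) + x₂ ⬝ᵥ (T₂ *ᵥ x₂)) ≤ (a + b) * (x ⬝ᵥ (C *ᵥ x)) :=
      mul_le_mul_of_nonneg_left f5 (by linarith)
    have g5 : vnorm y ^ 2 + vnorm x₂ ^ 2 ≤ (a + b) * (x ⬝ᵥ (C *ᵥ x)) := le_trans g3 g4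
    calc vnorm x ^ 2 = vnorm x₁ ^ 2 + vnorm x₂ ^ 2 := f1
      _ ≤ (vnorm y + s * vnorm x₂) ^ 2 + vnorm x₂ ^ 2 := by linarith
      _ ≤ (1 + s) ^ 2 * (vnorm y ^ 2 + vnorm x₂ ^ 2) := g2
      _ ≤ (1 + s) ^ 2 * ((a + b) * (x ⬝ᵥ (C *ᵥ x))) := by
          have h1s : (0:ℝ) ≤ (1 + s) ^ 2 := sq_nonneg _
          exact mul_le_mul_of_nonneg_left g5 h1s
      _ = (1 + s) ^ 2 * (a + b) * (x ⬝ᵥ (C *ᵥ x)) := by ring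
  -- conclude the inverse bound
  have hCdet : IsUnit C.det := isUnit_iff_ne_zero.2 hCpd.det_pos.ne'
  refine specNorm_le' hM0 fun v => ?_
  set u := C⁻¹ *ᵥ v with hu
  have hCu : C *ᵥ u = v := by
    rw [hu, Matrix.mulVec_mulVec, Matrix.mul_nonsing_inv C hCdet, Matrix.one_mulVec]
  have h := key2 u
  rw [hCu] at h
  have hdot : u ⬝ᵥ v ≤ vnorm u * vnorm v := dot_le_vnorm_mul _ _
  have hnu : 0 ≤ vnorm u := vnorm_nonneg _
  have hnv : 0 ≤ vnorm v := vnorm_nonneg _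
  rcases eq_or_ne (vnorm u) 0 with h0 | h0
  · rw [h0]; exact mul_nonneg hM0 hnv
  · have hpos : 0 < vnorm u := hnu.lt_of_ne' h0
    nlinarith [h, hdot, mul_nonneg hM0 hnv]
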